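/- arXiv:2402.13726 — 6 statements merged into one kernel-verified Lean document; each statement's English description precedes it below -/
import Mathlib

section
/- For all integers k with 0 ≤ k ≤ (65-p-t)·2^t, the tail sum ∑_{u=k+1}^{(65-p-t)·2^t} ρ(u) equals (2^t·(1 - t + e(k)) - k)/2^{e(k)}, where e(k) = min(t+1+⌊(k-1)/2^t⌋, 64-p) and ρ(u) = 2^{-e(u)}. -/
/-!
Write `R(j) = (2^t (1 - t + e j) - j) / 2^(e j)` for the right-hand side. Then
`R(j) = R(j+1) + 2^(-e(j+1))` for every `j`, and `R` vanishes at the top index `(65-p-t) 2^t`,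
where `e` has reached its cap `64 - p`; so the tail sum telescopes to `R(k)`.
The one-step identity holds because `e` is constant from `j` to `j+1` (and then only the `-j` in
the numerator moves), except at multiples `j = 2^t m` below the cap, where `e` steps from `t + m`
to `t + m + 1` and both sides equal `2^(-m)`.
-/

lemma Finset.sum_Icc_succ_eq_sub_of_eq_add {G : Type*} [AddCommGroup G] {g a : ℕ → G}
    (h : ∀ j, g j = g (j + 1) + a (j + 1)) {k M : ℕ} (hkM : k ≤ M) :
    ∑ u ∈ Finset.Icc (k + 1) M, a u = g k - g M := by
  induction M, hkM using Nat.le_induction with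
  | base => simp
  | succ M hkM ih => rw [Finset.sum_Icc_succ_top (by omega), ih, h M]; abel

section CappedExponent

variable {t c : ℕ} {e : ℕ → ℕ}

lemma cappedExponent_succ_eq_or_eq_succ (he0 : e 0 = t)
    (he : ∀ u : ℕ, 1 ≤ u → e u = min (t + 1 + (u - 1) / 2 ^ t) c) (htc : t ≤ c) (j : ℕ) :
    e (j + 1) = e j ∨ (e (j + 1) = e j + 1 ∧ j + 2 ^ t * t = 2 ^ t * e j) := by
  rw [he (j + 1) (by omega), Nat.add_sub_cancel]
  rcases Nat.eq_zero_or_pos j with rfl | hj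
  · rw [he0, Nat.zero_div]; omega
  have hsucc : j / 2 ^ t = (j - 1) / 2 ^ t + if 2 ^ t ∣ j then 1 else 0 := by
    conv_lhs => rw [← Nat.sub_add_cancel hj]
    rw [Nat.succ_div, Nat.sub_add_cancel hj]
  rw [he j hj]
  split_ifs at hsucc with hdvd
  · have hj_eq := Nat.mul_div_cancel' hdvd
    rw [hsucc] at hj_eq ⊢
    generalize (j - 1) / 2 ^ t = m at *
    by_cases hcap : t + 1 + m < c
    · right
      rw [min_eq_left hcap.le, min_eq_left (by omega), ← hj_eq]
      constructor <;> ring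
    · left; omega
  · left; rw [hsucc, add_zero]

lemma cappedExponent_top (he : ∀ u : ℕ, 1 ≤ u → e u = min (t + 1 + (u - 1) / 2 ^ t) c)
    (htc : t ≤ c) : e ((c + 1 - t) * 2 ^ t) = c := by
  obtain ⟨d, rfl⟩ := Nat.exists_eq_add_of_le htc
  have hpos : 0 < 2 ^ t := Nat.two_pow_pos t
  have hprod : 0 < (d + 1) * 2 ^ t := by positivity
  have hdiv : ((d + 1) * 2 ^ t - 1) / 2 ^ t = d :=
    Nat.div_eq_of_lt_le (by rw [add_mul]; omega) (by omega)
  rw [show t + d + 1 - t = d + 1 by omega, he _ hprod, hdiv]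
  omega

end CappedExponent

lemma tailClosedForm_eq_add (t E E' j : ℕ)
    (h : E' = E ∨ (E' = E + 1 ∧ j + 2 ^ t * t = 2 ^ t * E)) :
    ((2 : ℝ) ^ t * (1 - t + E) - j) / 2 ^ E
      = ((2 : ℝ) ^ t * (1 - t + E') - (j + 1 : ℕ)) / 2 ^ E' + 1 / 2 ^ E' := by
  push_cast
  rcases h with rfl | ⟨rfl, hj⟩
  · ring
  · have hj : (j : ℝ) = 2 ^ t * E - 2 ^ t * t := by
      rw [eq_sub_iff_add_eq]; exact_mod_cast hj
    rw [hj]; push_cast; field_simp; ring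

lemma tailClosedForm_top_eq_zero (t c : ℕ) (htc : t ≤ c) :
    ((2 : ℝ) ^ t * (1 - t + c) - ((c + 1 - t) * 2 ^ t : ℕ)) / 2 ^ c = 0 := by
  rw [Nat.cast_mul, Nat.cast_sub (by omega)]
  push_cast
  ring

theorem tail_sum_identity_general (p t : ℕ) (hpt : p + t ≤ 62)
    (e : ℕ → ℕ)
    (he0 : e 0 = t)
    (he : ∀ u : ℕ, 1 ≤ u → e u = min (t + 1 + (u - 1) / 2 ^ t) (64 - p))
    (k : ℕ) (hk : k ≤ (65 - p - t) * 2 ^ t) :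
    ∑ u ∈ Finset.Icc (k + 1) ((65 - p - t) * 2 ^ t), (1 : ℝ) / 2 ^ (e u)
      = ((2 : ℝ) ^ t * (1 - (t : ℝ) + (e k : ℝ)) - (k : ℝ)) / 2 ^ (e k) := by
  have htc : t ≤ 64 - p := by omega
  have hM : 65 - p - t = 64 - p + 1 - t := by omega
  let tail : ℕ → ℝ := fun j ↦ ((2 : ℝ) ^ t * (1 - t + e j) - j) / 2 ^ e j
  have hstep (j : ℕ) : tail j = tail (j + 1) + 1 / 2 ^ e (j + 1) :=
    tailClosedForm_eq_add t _ _ j (cappedExponent_succ_eq_or_eq_succ he0 he htc j)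
  have htop : tail ((65 - p - t) * 2 ^ t) = 0 := by
    simp only [tail, hM, cappedExponent_top he htc, tailClosedForm_top_eq_zero t _ htc]
  rw [Finset.sum_Icc_succ_eq_sub_of_eq_add hstep hk, htop, sub_zero]

theorem tail_sum_identity (p t : ℕ) (hp : 2 ≤ p) (hpt : p + t ≤ 62)
    (e : ℕ → ℕ)
    (he0 : e 0 = t)
    (he : ∀ u : ℕ, 1 ≤ u → e u = min (t + 1 + (u - 1) / 2 ^ t) (64 - p))
    (k : ℕ) (hk : k ≤ (65 - p - t) * 2 ^ t) :
    ∑ u ∈ Finset.Icc (k + 1) ((65 - p - t) * 2 ^ t), (1 : ℝ) / 2 ^ (e u)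
      = ((2 : ℝ) ^ t * (1 - (t : ℝ) + (e k : ℝ)) - (k : ℝ)) / 2 ^ (e k) :=
  tail_sum_identity_general p t hpt e he0 he k hk
end

section
/- The probability mass function ρ(u) = 2^{-min(t+1+⌊(u-1)/2^t⌋, 64-p)} on {1, ..., (65-p-t)·2^t} sums to 1. -/
/-!
Group the values of `u` into the blocks `k = ⌊(u - 1) / 2^t⌋ = 0, …, N` with `N = 64 - p - t`, each
of `2^t` consecutive values. Block `k < N` has total mass `2^t · 2^{-(t+1+k)} = 2^{-(k+1)}`, while
the cap `64 - p = t + N` gives the last block mass `2^{-N}`; and `∑_{k<N} 2^{-(k+1)} + 2^{-N} = 1`.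
-/

open Finset

theorem Finset.sum_range_comp_div {M : Type*} [AddCommMonoid M] (f : ℕ → M) (n m : ℕ) :
    ∑ u ∈ range (n * m), f (u / m) = ∑ k ∈ range n, m • f k := by
  induction n with
  | zero => simp
  | succ n ih =>
    rw [add_one_mul, sum_range_add, ih, sum_range_succ]
    congr 1
    calc ∑ j ∈ range m, f ((n * m + j) / m)
        = ∑ _j ∈ range m, f n := sum_congr rfl fun j hj ↦ by
          rw [mul_comm, Nat.mul_add_div (by grind), Nat.div_eq_of_lt (mem_range.1 hj), add_zero]
      _ = m • f n := by rw [sum_const, card_range]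

theorem Finset.sum_Icc_one_comp_sub_one {M : Type*} [AddCommMonoid M] (f : ℕ → M) (n : ℕ) :
    ∑ u ∈ Icc 1 n, f (u - 1) = ∑ u ∈ range n, f u := by
  rw [range_eq_Ico, ← sum_Ico_add_right_sub_eq (c := 1), zero_add, Ico_add_one_right_eq_Icc]

theorem sum_range_one_div_two_pow_succ_add_one_div_two_pow (N : ℕ) :
    ∑ k ∈ range N, (1 : ℝ) / 2 ^ (k + 1) + 1 / 2 ^ N = 1 := by
  induction N with
  | zero => simp
  | succ N ih =>
    have hhalves : (1 : ℝ) / 2 ^ (N + 1) + 1 / 2 ^ (N + 1) = 1 / 2 ^ N := by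
      rw [pow_succ]; ring
    rw [sum_range_succ, add_assoc, hhalves, ih]

theorem pmf_rho_sums_to_one_general (p t : ℕ) (hpt : t + p ≤ 62) :
    ∑ u ∈ Finset.Icc 1 ((65 - p - t) * 2 ^ t),
      (1 : ℝ) / 2 ^ (min (t + 1 + (u - 1) / 2 ^ t) (64 - p)) = 1 := by
  obtain ⟨N, hblocks, hcap⟩ : ∃ N, 65 - p - t = N + 1 ∧ 64 - p = t + N :=
    ⟨64 - p - t, by omega, by omega⟩
  have hmass : ∀ k, 2 ^ t • ((1 : ℝ) / 2 ^ min (t + 1 + k) (t + N))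
      = 1 / 2 ^ min (k + 1) N := by
    intro k
    rw [nsmul_eq_mul, add_right_comm, add_assoc, min_add_add_left, pow_add]
    push_cast
    field_simp
  calc _ = ∑ k ∈ range (N + 1), 2 ^ t • ((1 : ℝ) / 2 ^ min (t + 1 + k) (t + N)) := by
        rw [hblocks, hcap, sum_Icc_one_comp_sub_one (fun u ↦ 1 / 2 ^ min (t + 1 + u / 2 ^ t) (t + N)),
          sum_range_comp_div (fun k ↦ 1 / 2 ^ min (t + 1 + k) (t + N))]
    _ = ∑ k ∈ range N, (1 : ℝ) / 2 ^ (k + 1) + 1 / 2 ^ N := by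
        rw [sum_range_succ, hmass N, min_eq_right (by omega)]
        congr 1
        refine sum_congr rfl fun k hk ↦ ?_
        rw [hmass k, min_eq_left (by grind)]
    _ = 1 := sum_range_one_div_two_pow_succ_add_one_div_two_pow N

theorem pmf_rho_sums_to_one (p t : ℕ) (hp : 2 ≤ p) (hpt : t + p ≤ 62) :
    ∑ u ∈ Finset.Icc 1 ((65 - p - t) * 2 ^ t),
      (1 : ℝ) / 2 ^ (min (t + 1 + (u - 1) / 2 ^ t) (64 - p)) = 1 :=
  pmf_rho_sums_to_one_general p t hpt
end

section
/- For every positive integer c, the function g(x) = -x/((1+x)^c - 1) is concave on (0, ∞), i.e., g''(x) ≤ 0 for all x > 0. -/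
/-!
With `D x = (1 + x) ^ c - 1`, the second derivative of `-x / D x` is
`(x D D'' + 2 D D' - 2 x D'²) / D³`. Writing `y = 1 + x`, its numerator is
`-c y^(c-2) Q_c(y)` with `Q_m(y) = (m-1) y^(m+1) - (m+1) y^m + (m+1) y - (m-1)`, and `Q_m ≥ 0`
for `y ≥ 1` by induction on `m`: `Q_0 = 0` and
`Q_(m+1)(y) = y Q_m(y) + (y-1) (y^(m+1) - 1 - (m+1)(y-1))`, whose last factor is
nonnegative by Bernoulli's inequality.
-/

theorem sub_one_mul_pow_add_one_sub_nonneg {R : Type*} [CommRing R] [LinearOrder R]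
    [IsStrictOrderedRing R] {y : R} (hy : 1 ≤ y) (m : ℕ) :
    0 ≤ (m - 1) * y ^ (m + 1) - (m + 1) * y ^ m + (m + 1) * y - (m - 1) := by
  induction m with
  | zero => exact le_of_eq (by push_cast; ring)
  | succ m ih =>
    have bernoulli : 1 + (m + 1 : ℕ) * (y - 1) ≤ y ^ (m + 1) :=
      one_add_mul_sub_le_pow (by linarith) _
    push_cast at bernoulli ⊢
    calc (0 : R) ≤ y * ((m - 1) * y ^ (m + 1) - (m + 1) * y ^ m + (m + 1) * y - (m - 1))
          + (y - 1) * (y ^ (m + 1) - (1 + (m + 1) * (y - 1))) :=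
          add_nonneg (mul_nonneg (zero_le_one.trans hy) ih)
            (mul_nonneg (sub_nonneg.2 hy) (sub_nonneg.2 bernoulli))
      _ = _ := by ring

theorem one_add_pow_sub_one_concavity_ineq {R : Type*} [CommRing R] [LinearOrder R]
    [IsStrictOrderedRing R] {x : R} (hx : 0 ≤ x) (c : ℕ) :
    x * ((1 + x) ^ c - 1) * (c * ((c - 1 : ℕ) * (1 + x) ^ (c - 1 - 1)))
        + 2 * ((1 + x) ^ c - 1) * (c * (1 + x) ^ (c - 1))
      ≤ 2 * x * (c * (1 + x) ^ (c - 1)) ^ 2 := by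
  rcases c with _ | _ | n
  · simp
  · simp
  · have hQ := sub_one_mul_pow_add_one_sub_nonneg (y := 1 + x) (by linarith) (n + 2)
    simp only [Nat.add_sub_cancel, Nat.cast_add, Nat.cast_ofNat, Nat.cast_one] at hQ ⊢
    have hpos : 0 ≤ ((n : R) + 2) * (1 + x) ^ n := by positivity
    linear_combination mul_nonneg hpos hQ

theorem concaveOn_neg_id_div {s : Set ℝ} (hs : IsOpen s) (hconv : Convex ℝ s)
    {D D' D'' : ℝ → ℝ} (hD : ∀ x ∈ s, HasDerivAt D (D' x) x)
    (hD' : ∀ x ∈ s, HasDerivAt D' (D'' x) x) (hpos : ∀ x ∈ s, 0 < D x)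
    (hsign : ∀ x ∈ s, x * D x * D'' x + 2 * D x * D' x ≤ 2 * x * D' x ^ 2) :
    ConcaveOn ℝ s (fun x => -x / D x) := by
  refine concaveOn_of_hasDerivWithinAt2_nonpos hconv
    (f' := fun x => (x * D' x - D x) / D x ^ 2)
    (f'' := fun x => (x * D x * D'' x + 2 * D x * D' x - 2 * x * D' x ^ 2) / D x ^ 3)
    (fun x hx => ((hasDerivAt_id x).neg.div (hD x hx) (hpos x hx).ne').continuousAt
      |>.continuousWithinAt)
    (fun x hx => ?_) (fun x hx => ?_) (fun x hx => ?_) <;> rw [hs.interior_eq] at hx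
  · have h : HasDerivAt (fun y => -y / D y) ((-1 * D x - -x * D' x) / D x ^ 2) x :=
      (hasDerivAt_neg' x).div (hD x hx) (hpos x hx).ne'
    exact (h.congr_deriv (by ring)).hasDerivWithinAt
  · have hne := (hpos x hx).ne'
    have hnum : HasDerivAt (fun y => y * D' y - D y) (1 * D' x + x * D'' x - D' x) x :=
      ((hasDerivAt_id' x).mul (hD' x hx)).sub (hD x hx)
    have hden : HasDerivAt (fun y => D y ^ 2) (↑2 * D x ^ (2 - 1) * D' x) x := (hD x hx).pow 2
    refine ((hnum.div hden (pow_ne_zero 2 hne)).congr_deriv ?_).hasDerivWithinAt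
    field_simp
    ring
  · exact div_nonpos_of_nonpos_of_nonneg (by linarith [hsign x hx]) (pow_pos (hpos x hx) 3).le

theorem neg_x_div_pow_sub_one_concave (c : ℕ) (hc : 1 ≤ c) :
    ConcaveOn ℝ (Set.Ioi (0 : ℝ)) (fun x : ℝ => -x / ((1 + x) ^ c - 1)) := by
  refine concaveOn_neg_id_div isOpen_Ioi (convex_Ioi 0)
    (D' := fun x => c * (1 + x) ^ (c - 1))
    (D'' := fun x => c * ((c - 1 : ℕ) * (1 + x) ^ (c - 1 - 1)))
    (fun x _ => ?_) (fun x _ => ?_) (fun x hx => ?_)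
    (fun x hx => one_add_pow_sub_one_concavity_ineq hx.le c)
  · simpa using (((hasDerivAt_id' x).const_add 1).pow c).sub_const 1
  · simpa using (((hasDerivAt_id' x).const_add 1).pow (c - 1)).const_mul (c : ℝ)
  · exact sub_pos.2 (one_lt_pow₀ (lt_add_of_pos_right 1 hx) (by omega))
end

section
/- For every integer c ≥ 1 and every real x > 0, the inequality (c-1)·(1+x)^c + (c-1) ≥ 2·∑_{j=1}^{c-1} (1+x)^j holds. -/
theorem karamata_key_inequality (c : ℕ) (hc : 1 ≤ c) (x : ℝ) (hx : 0 < x) :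
    2 * ∑ j ∈ Finset.Icc 1 (c - 1), (1 + x) ^ j
      ≤ ((c : ℝ) - 1) * (1 + x) ^ c + ((c : ℝ) - 1) := by
  set y : ℝ := 1 + x with hy_def
  have hy : 1 ≤ y := by simp [hy_def]; linarith
  have hrefl : ∑ j ∈ Finset.Icc 1 (c-1), y ^ (c - j)
      = ∑ j ∈ Finset.Icc 1 (c-1), y ^ j := by
    apply Finset.sum_nbij' (fun j => c - j) (fun j => c - j)
    · intro a ha
      simp only [Finset.mem_Icc] at *
      omega
    · intro a ha
      simp only [Finset.mem_Icc] at *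
      omega
    · intro a ha
      simp only [Finset.mem_Icc] at ha
      omega
    · intro a ha
      simp only [Finset.mem_Icc] at ha
      omega
    · intro a ha
      rfl
  have key : ∀ j ∈ Finset.Icc 1 (c-1), y ^ j + y ^ (c - j) ≤ y ^ c + 1 := by
    intro j hj
    simp only [Finset.mem_Icc] at hj
    have h1 : (1:ℝ) ≤ y ^ j := one_le_pow₀ hy
    have h2 : (1:ℝ) ≤ y ^ (c - j) := one_le_pow₀ hy
    have h3 : y ^ j * y ^ (c - j) = y ^ c := by
      rw [← pow_add]
      congr 1
      omega
    nlinarith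
  have hsum : ∑ j ∈ Finset.Icc 1 (c-1), (y ^ j + y ^ (c - j))
      ≤ ∑ _j ∈ Finset.Icc 1 (c-1), (y ^ c + 1) := Finset.sum_le_sum key
  rw [Finset.sum_add_distrib, hrefl] at hsum
  rw [Finset.sum_const, Nat.card_Icc] at hsum
  have hcard : ((c - 1 + 1 - 1 : ℕ) : ℝ) = (c : ℝ) - 1 := by
    have : c - 1 + 1 - 1 = c - 1 := by omega
    rw [this, Nat.cast_sub hc]
    simp
  rw [nsmul_eq_mul, hcard] at hsum
  linarith
end

section
/- For each fixed real x > 0, the function y ↦ x·y/((1+x)^y - 1) is convex on y ∈ (0, ∞). -/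
/-!
With `c = log (1 + x)` the function is `y ↦ (x / c) * g (c * y)` for `g z = z / (exp z - 1)`, so
it suffices that `g` is convex on `(0, ∞)`. There
`g'' z = exp z * (z * (exp z + 1) - 2 * (exp z - 1)) / (exp z - 1) ^ 3`, and the numerator is
nonnegative for `z ≥ 0`: it vanishes at `0` and its derivative `(z - 1) * exp z + 1` is
nonnegative because `exp (-z) ≥ 1 - z`.
-/

open Set

namespace Real

lemma sub_one_mul_exp_add_one_nonneg (z : ℝ) : 0 ≤ (z - 1) * exp z + 1 := by
  have h := mul_le_mul_of_nonneg_right (add_one_le_exp (-z)) (exp_pos z).le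
  rw [← exp_add, neg_add_cancel, exp_zero] at h
  linarith

lemma two_mul_exp_sub_one_le_mul_exp_add_one {z : ℝ} (hz : 0 ≤ z) :
    2 * (exp z - 1) ≤ z * (exp z + 1) := by
  have hmono : Monotone fun z => z * (exp z + 1) - 2 * (exp z - 1) :=
    monotone_of_hasDerivAt_nonneg
      (fun z => (((hasDerivAt_id z).mul ((hasDerivAt_exp z).add_const 1)).sub
        (((hasDerivAt_exp z).sub_const 1).const_mul 2)).congr_deriv (by simp; ring))
      sub_one_mul_exp_add_one_nonneg
  simpa using hmono hz

lemma exp_sub_one_ne_zero {z : ℝ} (hz : z ≠ 0) : exp z - 1 ≠ 0 :=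
  sub_ne_zero.2 fun h => hz ((exp_eq_one_iff z).1 h)

lemma hasDerivAt_div_exp_sub_one {z : ℝ} (hz : z ≠ 0) :
    HasDerivAt (fun z => z / (exp z - 1)) ((exp z - 1 - z * exp z) / (exp z - 1) ^ 2) z :=
  ((hasDerivAt_id z).div ((hasDerivAt_exp z).sub_const 1) (exp_sub_one_ne_zero hz)).congr_deriv
    (by simp)

lemma hasDerivAt_deriv_div_exp_sub_one {z : ℝ} (hz : z ≠ 0) :
    HasDerivAt (fun z => (exp z - 1 - z * exp z) / (exp z - 1) ^ 2)
      (exp z * (z * (exp z + 1) - 2 * (exp z - 1)) / (exp z - 1) ^ 3) z := by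
  have hne := exp_sub_one_ne_zero hz
  refine ((((hasDerivAt_exp z).sub_const 1).sub ((hasDerivAt_id z).mul (hasDerivAt_exp z))).div
    (((hasDerivAt_exp z).sub_const 1).pow 2) (pow_ne_zero 2 hne)).congr_deriv ?_
  simp only [id, Pi.sub_apply, Pi.mul_apply, Pi.pow_apply]
  field_simp
  ring

lemma convexOn_div_exp_sub_one : ConvexOn ℝ (Ioi 0) fun z => z / (exp z - 1) := by
  refine convexOn_of_hasDerivWithinAt2_nonneg (convex_Ioi 0)
    (f' := fun z => (exp z - 1 - z * exp z) / (exp z - 1) ^ 2)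
    (f'' := fun z => exp z * (z * (exp z + 1) - 2 * (exp z - 1)) / (exp z - 1) ^ 3)
    (fun z hz => (hasDerivAt_div_exp_sub_one (ne_of_gt hz)).continuousAt.continuousWithinAt)
    ?_ ?_ ?_ <;> rw [interior_Ioi] <;> intro z (hz : 0 < z)
  · exact (hasDerivAt_div_exp_sub_one hz.ne').hasDerivWithinAt
  · exact (hasDerivAt_deriv_div_exp_sub_one hz.ne').hasDerivWithinAt
  · have hpos : 0 < exp z - 1 := sub_pos.2 (one_lt_exp_iff.2 hz)
    have hnum : 0 ≤ z * (exp z + 1) - 2 * (exp z - 1) :=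
      sub_nonneg.2 (two_mul_exp_sub_one_le_mul_exp_add_one hz.le)
    positivity

end Real

lemma ConvexOn.comp_const_mul_Ioi {f : ℝ → ℝ} (hf : ConvexOn ℝ (Ioi 0) f) {c : ℝ} (hc : 0 < c) :
    ConvexOn ℝ (Ioi 0) fun y => f (c * y) := by
  have h := hf.comp_linearMap (LinearMap.mul ℝ ℝ c)
  rwa [show ⇑(LinearMap.mul ℝ ℝ c) = (c * ·) from rfl, preimage_const_mul_Ioi₀ 0 hc,
    zero_div] at h

theorem h_convex_in_y (x : ℝ) (hx : 0 < x) :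
    ConvexOn ℝ (Set.Ioi (0 : ℝ)) (fun y : ℝ => x * y / ((1 + x) ^ y - 1)) := by
  have hc : 0 < Real.log (1 + x) := Real.log_pos (by linarith)
  refine ((Real.convexOn_div_exp_sub_one.comp_const_mul_Ioi hc).smul (div_pos hx hc).le).congr
    fun y _ => ?_
  dsimp only
  rw [smul_eq_mul, Real.rpow_def_of_pos (by linarith), ← mul_div_assoc]
  field_simp
end

section
/- The root x₀ of the ML equation f(x) = 0, with f(x) = A·2^K·x - ∑_{j=0}^{K-L} b_{K-j}·2^j·x/((1+x)^{2^j}-1), satisfies x₀ ≤ S/(A·2^K), where S := ∑_{i=L}^{K} b_i. -/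
/-! By Bernoulli's inequality each weight `2^j x / ((1 + x)^(2^j) - 1)` of the ML equation is at most
`1`, so at the root `A 2^K x₀` equals a sum bounded termwise by `∑ b_i`. -/

open Finset

theorem nat_mul_div_one_add_pow_sub_one_le_one {x : ℝ} (hx : 0 ≤ x) (n : ℕ) :
    n * x / ((1 + x) ^ n - 1) ≤ 1 := by
  have bernoulli : 1 + n * x ≤ (1 + x) ^ n := one_add_mul_le_pow (by linarith) n
  exact div_le_one_of_le₀ (by linarith) (by nlinarith [mul_nonneg (Nat.cast_nonneg n) hx])

theorem sum_Icc_eq_sum_range_sub {M : Type*} [AddCommMonoid M] (f : ℤ → M) {L K : ℤ}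
    (hLK : L ≤ K) :
    ∑ i ∈ Icc L K, f i = ∑ j ∈ range ((K - L).toNat + 1), f (K - j) :=
  sum_nbij' (fun i => (K - i).toNat) (fun j => K - j)
    (fun i hi => by simp only [mem_Icc] at hi; simp only [mem_range]; omega)
    (fun j hj => by simp only [mem_range] at hj; simp only [mem_Icc]; omega)
    (fun i hi => by simp only [mem_Icc] at hi; omega)
    (fun _ _ => by omega)
    (fun i hi => by simp only [mem_Icc] at hi; congr 1; omega)

theorem ml_root_upper_bound_general (A : ℝ) (hA : 0 < A) (L K : ℤ) (hLK : L ≤ K)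
    (b : ℤ → ℝ) (hb : ∀ i, 0 ≤ b i)
    (x₀ : ℝ) (hx₀ : 0 < x₀)
    (hroot : A * (2 : ℝ) ^ K * x₀ -
        ∑ j ∈ Finset.range ((K - L).toNat + 1),
          b (K - (j : ℤ)) * 2 ^ j * x₀ / ((1 + x₀) ^ (2 ^ j) - 1) = 0) :
    x₀ ≤ (∑ i ∈ Finset.Icc L K, b i) / (A * (2 : ℝ) ^ K) := by
  rw [le_div_iff₀ (by positivity), sum_Icc_eq_sum_range_sub b hLK]
  calc x₀ * (A * 2 ^ K)
      = ∑ j ∈ range ((K - L).toNat + 1), b (K - j) * 2 ^ j * x₀ / ((1 + x₀) ^ (2 ^ j) - 1) := by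
        linarith
    _ ≤ ∑ j ∈ range ((K - L).toNat + 1), b (K - j) := by
        refine sum_le_sum fun j _ => ?_
        have weight_le_one := nat_mul_div_one_add_pow_sub_one_le_one hx₀.le (2 ^ j)
        push_cast at weight_le_one
        rw [mul_assoc, mul_div_assoc]
        exact mul_le_of_le_one_right (hb _) weight_le_one

theorem ml_root_upper_bound (A : ℝ) (hA : 0 < A) (L K : ℤ) (hLK : L ≤ K)
    (b : ℤ → ℝ) (hb : ∀ i, 0 ≤ b i)
    (hne : ∃ i ∈ Finset.Icc L K, b i ≠ 0)
    (x₀ : ℝ) (hx₀ : 0 < x₀)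
    (hroot : A * (2 : ℝ) ^ K * x₀ -
        ∑ j ∈ Finset.range ((K - L).toNat + 1),
          b (K - (j : ℤ)) * 2 ^ j * x₀ / ((1 + x₀) ^ (2 ^ j) - 1) = 0) :
    x₀ ≤ (∑ i ∈ Finset.Icc L K, b i) / (A * (2 : ℝ) ^ K) :=
  ml_root_upper_bound_general A hA L K hLK b hb x₀ hx₀ hroot
end
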